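/- Let γ > 0, D > 0 and define β²(V) = (2λ_μ/(μ+1)²)·[V(3σ_μ² + V²)·erfc(−V/(σ_μ√2)) + 2(2σ_μ² + V²)·(σ_μ/√(2π))·exp(−V²/(2σ_μ²))] with λ_μ = (1/4)√(π(μ+1)γ/(2D)) and σ_μ = √((μ+1)Dγ). Then as μ → ∞, β²(V) + β²(−V) → 2γ²D uniformly for V in compact sets. -/

import Mathlib

open MeasureTheory Real Filter

/-- The complementary error function `erfc(z) = (2/√π) ∫_z^∞ exp(-s²) ds`. -/
noncomputable def erfc (z : ℝ) : ℝ :=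
  (2 / Real.sqrt Real.pi) * ∫ s in Set.Ioi z, Real.exp (-s ^ 2)

/-- The squared noise coefficient `β²(V)` from collisions on one side in the 1D MD
model [A], with `λ_μ = (1/4)√(π(μ+1)γ/(2D))` and `σ_μ = √((μ+1)Dγ)`. -/
noncomputable def betaSq (γ D μ V : ℝ) : ℝ :=
  (2 * ((1 / 4) * Real.sqrt (Real.pi * (μ + 1) * γ / (2 * D))) / (μ + 1) ^ 2) *
    (V * (3 * Real.sqrt ((μ + 1) * D * γ) ^ 2 + V ^ 2) *
        erfc (-V / (Real.sqrt ((μ + 1) * D * γ) * Real.sqrt 2)) +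
      2 * (2 * Real.sqrt ((μ + 1) * D * γ) ^ 2 + V ^ 2) *
        (Real.sqrt ((μ + 1) * D * γ) / Real.sqrt (2 * Real.pi)) *
        Real.exp (-V ^ 2 / (2 * Real.sqrt ((μ + 1) * D * γ) ^ 2)))

/-!
Substituting `ε = 1/√(μ+1)` turns `β²(V)` into an expression that is jointly continuous in
`(ε, V)` on all of `ℝ²`: the prefactor `λ_μ/(μ+1)²` is of order `ε³` and cancels the powers of
`σ_μ = √(Dγ)/ε`, leaving the erfc term with a factor `ε` and the Gaussian term finite. At
`ε = 0` only the Gaussian term survives and equals `γ²D`, so each of `β²(V)`, `β²(-V)`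
tends to `γ²D`, and uniform convergence on a compact set of `V` follows from continuity in
`(ε, V)` by compactness.
-/

open scoped Topology

@[fun_prop]
theorem continuous_erfc : Continuous erfc := by
  have hg : Integrable fun s : ℝ => exp (-s ^ 2) := by
    simpa using integrable_exp_neg_mul_sq one_pos
  have herfc : erfc = fun z => (2 / √π) *
      ((∫ s in Set.Ioi 0, exp (-s ^ 2)) - ∫ s in (0 : ℝ)..z, exp (-s ^ 2)) := funext fun z => by
    rw [erfc, ← intervalIntegral.integral_Ioi_sub_Ioi' hg.integrableOn hg.integrableOn,
      sub_sub_cancel]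
  rw [herfc]
  exact continuous_const.mul (continuous_const.sub (hg.continuous_primitive 0))

/-- `β²(V)` in the variable `ε = 1/√(μ+1)`, in which it extends continuously to `ε = 0`. -/
noncomputable def betaSqScaled (γ D ε V : ℝ) : ℝ :=
  (1 / 2) * √(π * γ / (2 * D)) *
    (ε * V * (3 * (D * γ) + V ^ 2 * ε ^ 2) * erfc (-(V * ε) / √(2 * (D * γ))) +
      2 * (2 * (D * γ) + V ^ 2 * ε ^ 2) * (√(D * γ) / √(2 * π)) *
        exp (-(V * ε) ^ 2 / (2 * (D * γ))))

theorem continuous_betaSqScaled (γ D : ℝ) : Continuous ↿(betaSqScaled γ D) := by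
  change Continuous fun p : ℝ × ℝ => betaSqScaled γ D p.1 p.2
  unfold betaSqScaled
  fun_prop

theorem betaSqScaled_zero {γ D : ℝ} (hγ : 0 < γ) (hD : 0 < D) (V : ℝ) :
    betaSqScaled γ D 0 V = γ ^ 2 * D := by
  have key : √(π * γ / (2 * D)) * √(D * γ) / √(2 * π) = γ / 2 := by
    rw [← sqrt_mul (by positivity), ← sqrt_div' _ (by positivity),
      show π * γ / (2 * D) * (D * γ) / (2 * π) = (γ / 2) ^ 2 by field_simp,
      sqrt_sq (by positivity)]
  simp only [betaSqScaled, zero_mul, mul_zero, zero_add, add_zero, zero_div, exp_zero, mul_one,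
    ne_eq, OfNat.ofNat_ne_zero, not_false_eq_true, zero_pow, neg_zero]
  linear_combination 2 * D * γ * key

theorem betaSq_eq_betaSqScaled {γ D μ : ℝ} (hγ : 0 < γ) (hD : 0 < D) (hμ : -1 < μ) (V : ℝ) :
    betaSq γ D μ V = betaSqScaled γ D (√(μ + 1))⁻¹ V := by
  have hμ' : 0 ≤ μ + 1 := by linarith
  have hDγ : 0 < D * γ := by positivity
  set s := √(μ + 1)
  set t := √(D * γ) with ht
  have hs0 : 0 < s := sqrt_pos.2 (by linarith)
  have hσ : √((μ + 1) * D * γ) = s * t := by rw [mul_assoc, sqrt_mul hμ']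
  have hPre : √(π * (μ + 1) * γ / (2 * D)) = s * √(π * γ / (2 * D)) := by
    rw [← sqrt_mul hμ']; ring_nf
  have h2 : √(2 * (D * γ)) = √2 * t := sqrt_mul zero_le_two _
  have hs2 : μ + 1 = s ^ 2 := (sq_sqrt hμ').symm
  have ht2 : D * γ = t ^ 2 := (sq_sqrt hDγ.le).symm
  have hErfcArg : -V / (s * t * √2) = -(V * s⁻¹) / (√2 * t) := by field_simp
  have hExpArg : -V ^ 2 / (2 * (s * t) ^ 2) = -(V * s⁻¹) ^ 2 / (2 * t ^ 2) := by field_simp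
  unfold betaSq betaSqScaled
  rw [hσ, hPre, h2, hErfcArg, ← ht, ht2, hExpArg, hs2]
  field_simp
  ring

theorem tendsto_inv_sqrt_add_one_atTop :
    Tendsto (fun μ : ℝ => (√(μ + 1))⁻¹) atTop (𝓝 0) :=
  tendsto_inv_atTop_zero.comp <|
    tendsto_sqrt_atTop.comp <| tendsto_atTop_add_const_right _ 1 tendsto_id

theorem Continuous.tendstoUniformlyOn_comp_tendsto {ι α β γ : Type*} [TopologicalSpace α]
    [TopologicalSpace β] [UniformSpace γ] {F : α → β → γ} (hF : Continuous ↿F) {K : Set β}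
    (hK : IsCompact K) {l : Filter ι} {g : ι → α} {x : α} (hg : Tendsto g l (𝓝 x)) :
    TendstoUniformlyOn (fun i => F (g i)) (F x) l K := fun u hu => by
  obtain ⟨v, hv, hvu⟩ :=
    hK.mem_uniformity_of_prod hF.continuousOn (Set.mem_univ x) (symm_le_uniformity hu)
  rw [nhdsWithin_univ] at hv
  exact mem_of_superset (hg hv) fun i hi V hV => hvu (g i) hi V hV

theorem tendstoUniformlyOn_betaSq {γ D : ℝ} (hγ : 0 < γ) (hD : 0 < D) {K : Set ℝ}
    (hK : IsCompact K) :
    TendstoUniformlyOn (fun μ V => betaSq γ D μ V) (fun _ => γ ^ 2 * D) atTop K := by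
  refine ((continuous_betaSqScaled γ D).tendstoUniformlyOn_comp_tendsto hK
    tendsto_inv_sqrt_add_one_atTop).congr ?_ |>.congr_right fun V _ => betaSqScaled_zero hγ hD V
  filter_upwards [eventually_gt_atTop (-1)] with μ hμ V _
  exact (betaSq_eq_betaSqScaled hγ hD hμ V).symm

/-- As `μ → ∞`, the total noise intensity `β²(V) + β²(-V)` converges to `2γ²D`
uniformly for `V` in compact sets. -/
theorem stmt_10 (γ D : ℝ) (hγ : 0 < γ) (hD : 0 < D) (K : Set ℝ) (hK : IsCompact K) :
    TendstoUniformlyOn (fun (μ : ℝ) (V : ℝ) => betaSq γ D μ V + betaSq γ D μ (-V))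
      (fun _ => 2 * γ ^ 2 * D) atTop K := by
  have hneg := (tendstoUniformlyOn_betaSq hγ hD hK.neg).comp Neg.neg
  rw [Set.neg_preimage, neg_neg] at hneg
  refine ((tendstoUniformlyOn_betaSq hγ hD hK).add hneg).congr_right fun V _ => ?_
  simp only [Pi.add_apply, Function.comp_apply]
  ring
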